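/- In G(n,p) with p ≤ 5 log n / n, with high probability every vertex subset S with |S| ≤ 5n/(log n · log log n) induces at most 7|S| log n / log log n edges. -/

import Mathlib

open Filter Topology

attribute [local instance] Classical.propDecidable

noncomputable def erWeight (n : ℕ) (p : ℝ) (ω : Sym2 (Fin n) → Bool) : ℝ :=
  ∏ e : Sym2 (Fin n),
    if e.IsDiag then (if ω e then 0 else 1) else (if ω e then p else 1 - p)

def graphOf {n : ℕ} (ω : Sym2 (Fin n) → Bool) : SimpleGraph (Fin n) :=
  SimpleGraph.fromRel (fun u v => ω s(u, v))

noncomputable def erP (n : ℕ) (p : ℝ) (A : SimpleGraph (Fin n) → Prop) : ℝ :=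
  ∑ ω : Sym2 (Fin n) → Bool, erWeight n p ω * (if A (graphOf ω) then 1 else 0)

/-- The number of edges of `G` induced by the vertex set `S`. -/
noncomputable def edgesIn {n : ℕ} (G : SimpleGraph (Fin n)) (S : Finset (Fin n)) : ℕ :=
  (Finset.univ.filter
    (fun e : Sym2 (Fin n) => e ∈ G.edgeSet ∧ ∀ v ∈ e, v ∈ S)).card

/-!
First moment method. If a set `S` of size `s ≥ 1` spans more than
`α = 7 s log n / log log n` edges, then some `k = ⌊α⌋ + 1` of its at most `s²` potential
edges are all present, which has probability at most
`C(s², k) pᵏ ≤ (e s² p / k)ᵏ ≤ (10 / log n)ᵏ ≤ n^-(s+1)` as long as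
`s ≤ 5n / (log n log log n)` and `log log n ≥ 21`. A union bound over all `S` then gives failure
probability at most `∑_S n^-(|S|+1) = n⁻¹ (1 + 1/n)ⁿ ≤ e / n`.
-/

open Finset Real

lemma Fintype.sum_prod_apply_bool {ι R : Type*} [Fintype ι] [DecidableEq ι] [CommSemiring R]
    (f : ι → Bool → R) :
    ∑ ω : ι → Bool, ∏ i, f i (ω i) = ∏ i, (f i true + f i false) := by
  rw [← Fintype.prod_sum]
  simp only [Fintype.sum_bool]

lemma Finset.card_sym2_le_sq {α : Type*} [DecidableEq α] (s : Finset α) :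
    #s.sym2 ≤ #s ^ 2 := by
  rw [card_sym2, Nat.choose_two_right, Nat.add_sub_cancel]
  exact Nat.div_le_of_le_mul (by nlinarith)

lemma Nat.choose_mul_pow_le (m k : ℕ) {x : ℝ} (hx : 0 ≤ x) :
    (m.choose k : ℝ) * x ^ k ≤ (exp 1 * m * x / k) ^ k := by
  rcases k.eq_zero_or_pos with rfl | hk
  · simp
  calc (m.choose k : ℝ) * x ^ k ≤ m ^ k / k.factorial * x ^ k := by
        gcongr; exact Nat.choose_le_pow_div k m
    _ = (m * x / k) ^ k * ((k : ℝ) ^ k / k.factorial) := by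
        have : (k : ℝ) ≠ 0 := by positivity
        rw [div_pow]; field_simp; ring
    _ ≤ (m * x / k) ^ k * exp k := by
        gcongr; exact pow_div_factorial_le_exp _ (Nat.cast_nonneg k) k
    _ = (exp 1 * m * x / k) ^ k := by
        rw [← exp_one_pow, ← mul_pow]; ring_nf

lemma log_ten_lt_three : log 10 < 3 := by
  rw [log_lt_iff_lt_exp (by norm_num)]
  calc (10 : ℝ) < 2.7182818283 ^ 3 := by norm_num
    _ < exp 1 ^ 3 := by gcongr; exact exp_one_gt_d9
    _ = exp 3 := by rw [exp_one_pow]; norm_num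

lemma exp_one_mul_div_le {n s m k : ℕ} {p : ℝ} (hLL : 0 < log (log n)) (hs : 1 ≤ s)
    (hm : (m : ℝ) ≤ s ^ 2) (hp0 : 0 ≤ p) (hp : p ≤ 5 * log n / n)
    (hsn : (s : ℝ) ≤ 5 * n / (log n * log (log n))) (hk : 7 * s * log n / log (log n) ≤ k) :
    exp 1 * m * p / k ≤ 10 / log n := by
  have hL : 0 < log n := one_pos.trans ((log_pos_iff (log_natCast_nonneg n)).1 hLL)
  have hn : (0 : ℝ) < n := one_pos.trans ((log_pos_iff n.cast_nonneg).1 hL)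
  have hs0 : (0 : ℝ) < s := by exact_mod_cast hs
  have hsn' : s * log (log n) / n ≤ 5 / log n := by
    rw [le_div_iff₀ (by positivity)] at hsn
    rw [div_le_div_iff₀ hn hL]; linarith
  calc exp 1 * m * p / k ≤ exp 1 * s ^ 2 * (5 * log n / n) / (7 * s * log n / log (log n)) := by
        gcongr
    _ = 5 * exp 1 / 7 * (s * log (log n) / n) := by
        field_simp
    _ ≤ 5 * exp 1 / 7 * (5 / log n) := by gcongr
    _ ≤ 10 / log n := by
        rw [← mul_div_assoc]
        gcongr
        linarith [exp_one_lt_d9]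

lemma ten_div_log_pow_le {n s k : ℕ} (hLL : 21 ≤ log (log n)) (hs : 1 ≤ s)
    (hk : 7 * s * log n / log (log n) ≤ k) : (10 / log n) ^ k ≤ (n : ℝ)⁻¹ ^ (s + 1) := by
  have hL : 0 < log n := one_pos.trans ((log_pos_iff (log_natCast_nonneg n)).1 (by linarith))
  have hn : (0 : ℝ) < n := one_pos.trans ((log_pos_iff n.cast_nonneg).1 hL)
  have hkLL : 7 * s * log n ≤ k * log (log n) := by
    rwa [div_le_iff₀ (by linarith)] at hk
  have hs' : (1 : ℝ) ≤ s := by exact_mod_cast hs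
  have h10 : 10 / log n = exp (log 10 - log (log n)) := by
    rw [exp_sub, exp_log (by norm_num), exp_log hL]
  have hn' : (n : ℝ)⁻¹ = exp (-log n) := by rw [exp_neg, exp_log hn]
  rw [h10, hn', ← exp_nat_mul, ← exp_nat_mul, exp_le_exp]
  push_cast
  -- `log 10 < 3 ≤ log (log n) / 7`, so `k (log log n - log 10) ≥ 6 s log n ≥ (s + 1) log n`
  nlinarith [log_ten_lt_three, mul_le_mul_of_nonneg_left (log_ten_lt_three.le.trans
    (by linarith : (3 : ℝ) ≤ log (log n) / 7)) (Nat.cast_nonneg k : (0 : ℝ) ≤ k)]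

lemma sum_inv_pow_card_add_one_le (n : ℕ) :
    ∑ S : Finset (Fin n), (n : ℝ)⁻¹ ^ (#S + 1) ≤ exp 1 / n := by
  calc ∑ S : Finset (Fin n), (n : ℝ)⁻¹ ^ (#S + 1)
      = (n : ℝ)⁻¹ * ∑ S : Finset (Fin n), (n : ℝ)⁻¹ ^ #S * 1 ^ (n - #S) := by
        simp only [one_pow, mul_one, mul_sum, pow_succ']
    _ = (n : ℝ)⁻¹ * (1 + (n : ℝ)⁻¹) ^ n := by rw [Fin.sum_pow_mul_eq_add_pow, add_comm]
    _ ≤ (n : ℝ)⁻¹ * exp 1 := by gcongr; exact one_add_inv_pow_le_exp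
    _ = exp 1 / n := by ring

section ErdosRenyi

variable {n : ℕ} {p : ℝ}

noncomputable def edgeWeight (p : ℝ) (e : Sym2 (Fin n)) (b : Bool) : ℝ :=
  if e.IsDiag then (if b then 0 else 1) else (if b then p else 1 - p)

lemma erWeight_eq_prod (ω : Sym2 (Fin n) → Bool) :
    erWeight n p ω = ∏ e, edgeWeight p e (ω e) := rfl

lemma edgeWeight_nonneg (hp0 : 0 ≤ p) (hp1 : p ≤ 1) (e : Sym2 (Fin n)) (b : Bool) :
    0 ≤ edgeWeight p e b := by
  unfold edgeWeight; split_ifs <;> linarith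

lemma edgeWeight_true_le (hp0 : 0 ≤ p) (e : Sym2 (Fin n)) : edgeWeight p e true ≤ p := by
  by_cases h : e.IsDiag <;> simp [edgeWeight, h, hp0]

lemma edgeWeight_true_add_false (e : Sym2 (Fin n)) :
    edgeWeight p e true + edgeWeight p e false = 1 := by
  by_cases h : e.IsDiag <;> simp [edgeWeight, h]

lemma erWeight_nonneg (hp0 : 0 ≤ p) (hp1 : p ≤ 1) (ω : Sym2 (Fin n) → Bool) :
    0 ≤ erWeight n p ω :=
  prod_nonneg fun e _ ↦ edgeWeight_nonneg hp0 hp1 e _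

lemma sum_erWeight : ∑ ω : Sym2 (Fin n) → Bool, erWeight n p ω = 1 := by
  simp only [erWeight_eq_prod, Fintype.sum_prod_apply_bool, edgeWeight_true_add_false,
    prod_const_one]

lemma erP_le_sum_mul (hp0 : 0 ≤ p) (hp1 : p ≤ 1) {A : SimpleGraph (Fin n) → Prop}
    (f : (Sym2 (Fin n) → Bool) → ℝ) (hf0 : ∀ ω, 0 ≤ f ω)
    (hf1 : ∀ ω, A (graphOf ω) → 1 ≤ f ω) :
    erP n p A ≤ ∑ ω, erWeight n p ω * f ω := by
  refine sum_le_sum fun ω _ ↦ mul_le_mul_of_nonneg_left ?_ (erWeight_nonneg hp0 hp1 ω)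
  split_ifs with h
  exacts [hf1 ω h, hf0 ω]

lemma erP_nonneg (hp0 : 0 ≤ p) (hp1 : p ≤ 1) (A : SimpleGraph (Fin n) → Prop) :
    0 ≤ erP n p A :=
  sum_nonneg fun ω _ ↦ mul_nonneg (erWeight_nonneg hp0 hp1 ω) (by split_ifs <;> norm_num)

lemma erP_add_erP_not (A : SimpleGraph (Fin n) → Prop) :
    erP n p A + erP n p (fun G ↦ ¬ A G) = 1 := by
  rw [erP, erP, ← sum_add_distrib]
  refine (sum_congr rfl fun ω _ ↦ ?_).trans (sum_erWeight (p := p))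
  by_cases h : A (graphOf ω) <;> simp [h]

lemma erP_mono (hp0 : 0 ≤ p) (hp1 : p ≤ 1) {A B : SimpleGraph (Fin n) → Prop}
    (h : ∀ G, A G → B G) : erP n p A ≤ erP n p B :=
  erP_le_sum_mul hp0 hp1 _ (fun _ ↦ by split_ifs <;> norm_num)
    (fun ω hA ↦ by simp [h _ hA])

lemma erP_exists_le_sum {ι : Type*} (hp0 : 0 ≤ p) (hp1 : p ≤ 1) (I : Finset ι)
    (A : ι → SimpleGraph (Fin n) → Prop) :
    erP n p (fun G ↦ ∃ i ∈ I, A i G) ≤ ∑ i ∈ I, erP n p (A i) := by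
  have hind (ω : Sym2 (Fin n) → Bool) (i : ι) :
      (0 : ℝ) ≤ if A i (graphOf ω) then 1 else 0 := by
    split_ifs <;> norm_num
  refine (erP_le_sum_mul hp0 hp1 (fun ω ↦ ∑ i ∈ I, if A i (graphOf ω) then 1 else 0)
    (fun ω ↦ sum_nonneg fun i _ ↦ hind ω i) fun ω h ↦ ?_).trans_eq ?_
  · obtain ⟨i, hi, hAi⟩ := h
    exact (if_pos hAi).symm.le.trans (single_le_sum (fun j _ ↦ hind ω j) hi)
  · simp only [mul_sum, erP]
    exact sum_comm

lemma mem_edgeSet_graphOf {ω : Sym2 (Fin n) → Bool} {e : Sym2 (Fin n)}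
    (he : e ∈ (graphOf ω).edgeSet) : ω e = true := by
  induction e using Sym2.inductionOn with
  | hf u v =>
    simp only [graphOf, SimpleGraph.mem_edgeSet, SimpleGraph.fromRel_adj] at he
    rcases he.2 with h | h
    · exact h
    · rwa [Sym2.eq_swap]

lemma erP_forall_mem_edgeSet_le_pow (hp0 : 0 ≤ p) (hp1 : p ≤ 1) (T : Finset (Sym2 (Fin n))) :
    erP n p (fun G ↦ ∀ e ∈ T, e ∈ G.edgeSet) ≤ p ^ #T := by
  set g : Sym2 (Fin n) → Bool → ℝ := fun e b ↦ if e ∈ T → b then 1 else 0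
  have hg0 (e : Sym2 (Fin n)) (b : Bool) : 0 ≤ g e b := by
    simp only [g]; split_ifs <;> norm_num
  calc erP n p (fun G ↦ ∀ e ∈ T, e ∈ G.edgeSet)
      ≤ ∑ ω, erWeight n p ω * ∏ e, g e (ω e) := by
        refine erP_le_sum_mul hp0 hp1 _ (fun ω ↦ prod_nonneg fun e _ ↦ hg0 e _)
          fun ω hω ↦ ?_
        exact (prod_eq_one fun e _ ↦ if_pos fun he ↦ mem_edgeSet_graphOf (hω e he)).symm.le
    _ = ∏ e, if e ∈ T then edgeWeight p e true else 1 := by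
        simp only [erWeight_eq_prod, ← prod_mul_distrib]
        rw [Fintype.sum_prod_apply_bool fun e b ↦ edgeWeight p e b * g e b]
        refine prod_congr rfl fun e _ ↦ ?_
        by_cases he : e ∈ T <;> simp [g, he, edgeWeight_true_add_false]
    _ ≤ ∏ e, if e ∈ T then p else 1 := by
        refine prod_le_prod (fun e _ ↦ ?_) fun e _ ↦ ?_ <;> split_ifs
        exacts [edgeWeight_nonneg hp0 hp1 e true, zero_le_one, edgeWeight_true_le hp0 e, le_rfl]
    _ = p ^ #T := by simp [prod_ite_mem]

lemma erP_le_choose_mul_pow (hp0 : 0 ≤ p) (hp1 : p ≤ 1) (P : Finset (Sym2 (Fin n))) (k : ℕ) :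
    erP n p (fun G ↦ k ≤ #{e ∈ P | e ∈ G.edgeSet}) ≤ (#P).choose k * p ^ k := by
  calc erP n p (fun G ↦ k ≤ #{e ∈ P | e ∈ G.edgeSet})
      ≤ erP n p (fun G ↦ ∃ T ∈ P.powersetCard k, ∀ e ∈ T, e ∈ G.edgeSet) := by
        refine erP_mono hp0 hp1 fun G hk ↦ ?_
        obtain ⟨T, hT, rfl⟩ := exists_subset_card_eq hk
        exact ⟨T, mem_powersetCard.2 ⟨hT.trans (filter_subset _ _), rfl⟩,
          fun e he ↦ (mem_filter.1 (hT he)).2⟩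
    _ ≤ ∑ T ∈ P.powersetCard k, p ^ k := by
        refine (erP_exists_le_sum hp0 hp1 _ _).trans (sum_le_sum fun T hT ↦ ?_)
        rw [← (mem_powersetCard.1 hT).2]
        exact erP_forall_mem_edgeSet_le_pow hp0 hp1 T
    _ = (#P).choose k * p ^ k := by rw [sum_const, card_powersetCard, nsmul_eq_mul]

lemma edgesIn_eq_card_filter_sym2 (G : SimpleGraph (Fin n)) (S : Finset (Fin n)) :
    edgesIn G S = #{e ∈ S.sym2 | e ∈ G.edgeSet} := by
  unfold edgesIn
  congr 1
  ext e
  simp [mem_sym2_iff, and_comm]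

lemma erP_lt_edgesIn_le (hp0 : 0 ≤ p) (hp1 : p ≤ 1) (hLL : 21 ≤ log (log n))
    (hp : p ≤ 5 * log n / n) (S : Finset (Fin n))
    (hS : (#S : ℝ) ≤ 5 * n / (log n * log (log n))) :
    erP n p (fun G ↦ 7 * #S * log n / log (log n) < edgesIn G S)
      ≤ (n : ℝ)⁻¹ ^ (#S + 1) := by
  have hL : 0 ≤ log n := log_natCast_nonneg n
  set α := 7 * #S * log n / log (log n)
  have hα : 0 ≤ α := div_nonneg (by positivity) (by linarith)
  set k := ⌊α⌋₊ + 1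
  calc erP n p (fun G ↦ α < edgesIn G S)
      ≤ erP n p (fun G ↦ k ≤ #{e ∈ S.sym2 | e ∈ G.edgeSet}) :=
        erP_mono hp0 hp1 fun G h ↦ edgesIn_eq_card_filter_sym2 G S ▸ (Nat.floor_lt hα).2 h
    _ ≤ (#S.sym2).choose k * p ^ k := erP_le_choose_mul_pow hp0 hp1 _ _
    _ ≤ (n : ℝ)⁻¹ ^ (#S + 1) := ?_
  rcases S.eq_empty_or_nonempty with rfl | hS0
  · simp [k]
  have hk : α ≤ k := by simpa [k] using (Nat.lt_floor_add_one α).le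
  calc ((#S.sym2).choose k : ℝ) * p ^ k ≤ (exp 1 * #S.sym2 * p / k) ^ k :=
        Nat.choose_mul_pow_le _ _ hp0
    _ ≤ (10 / log n) ^ k :=
        pow_le_pow_left₀ (by positivity) (exp_one_mul_div_le (by linarith) hS0.card_pos
          (by exact_mod_cast S.card_sym2_le_sq) hp0 hp hS hk) k
    _ ≤ (n : ℝ)⁻¹ ^ (#S + 1) := ten_div_log_pow_le hLL hS0.card_pos hk

def SmallSetsSparse (G : SimpleGraph (Fin n)) : Prop :=
  ∀ S : Finset (Fin n), (#S : ℝ) ≤ 5 * n / (log n * log (log n)) →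
    (edgesIn G S : ℝ) ≤ 7 * #S * log n / log (log n)

lemma erP_not_smallSetsSparse_le (hp0 : 0 ≤ p) (hp1 : p ≤ 1) (hLL : 21 ≤ log (log n))
    (hp : p ≤ 5 * log n / n) :
    erP n p (fun G ↦ ¬ SmallSetsSparse G) ≤ exp 1 / n := by
  set small : Finset (Finset (Fin n)) := {S | (#S : ℝ) ≤ 5 * n / (log n * log (log n))}
  calc erP n p (fun G ↦ ¬ SmallSetsSparse G)
      ≤ erP n p (fun G ↦ ∃ S ∈ small, 7 * #S * log n / log (log n) < edgesIn G S) := by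
        refine erP_mono hp0 hp1 fun G hG ↦ ?_
        simp only [SmallSetsSparse, not_forall, not_le, exists_prop] at hG
        obtain ⟨S, hS, hlt⟩ := hG
        exact ⟨S, mem_filter.2 ⟨mem_univ S, hS⟩, hlt⟩
    _ ≤ ∑ S ∈ small, (n : ℝ)⁻¹ ^ (#S + 1) :=
        (erP_exists_le_sum hp0 hp1 _ _).trans <| sum_le_sum fun S hS ↦
          erP_lt_edgesIn_le hp0 hp1 hLL hp S (mem_filter.1 hS).2
    _ ≤ ∑ S : Finset (Fin n), (n : ℝ)⁻¹ ^ (#S + 1) :=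
        sum_le_sum_of_subset_of_nonneg (subset_univ _) fun _ _ _ ↦ by positivity
    _ ≤ exp 1 / n := sum_inv_pow_card_add_one_le n

end ErdosRenyi

/-- In `G(n,p)` with `p ≤ 5 log n / n`, w.h.p. every vertex subset `S` with
`|S| ≤ 5n/(log n · log log n)` induces at most `7 |S| log n / log log n` edges. -/
theorem stmt_6 (p : ℕ → ℝ) (hp0 : ∀ n, 0 ≤ p n)
    (hp : ∀ᶠ n : ℕ in atTop, p n ≤ 5 * Real.log n / n) :
    Tendsto (fun n => erP n (p n) (fun G =>
        ∀ S : Finset (Fin n),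
          (S.card : ℝ) ≤ 5 * n / (Real.log n * Real.log (Real.log n)) →
          (edgesIn G S : ℝ) ≤ 7 * S.card * Real.log n / Real.log (Real.log n)))
      atTop (𝓝 1) := by
  have hLL : ∀ᶠ n : ℕ in atTop, 21 ≤ log (log n) :=
    ((tendsto_log_atTop.comp tendsto_log_atTop).comp
      tendsto_natCast_atTop_atTop).eventually_ge_atTop 21
  have hp1 : ∀ᶠ n : ℕ in atTop, p n ≤ 1 := by
    have h : Tendsto (fun n : ℕ ↦ 5 * (log n / n)) atTop (𝓝 0) := by
      simpa using (isLittleO_log_id_atTop.tendsto_div_nhds_zero.comp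
        tendsto_natCast_atTop_atTop).const_mul 5
    filter_upwards [hp, h.eventually (gt_mem_nhds one_pos)] with n hpn hn
    linarith [mul_div_assoc 5 (log n) n]
  have hbad : Tendsto (fun n ↦ erP n (p n) (fun G ↦ ¬ SmallSetsSparse G)) atTop (𝓝 0) :=
    squeeze_zero' (hp1.mono fun n h ↦ erP_nonneg (hp0 n) h _)
      (by filter_upwards [hp, hp1, hLL] with n hpn h1 hn
          exact erP_not_smallSetsSparse_le (hp0 n) h1 hn hpn)
      (tendsto_const_nhds.div_atTop tendsto_natCast_atTop_atTop)
  have hgood := (tendsto_const_nhds (x := (1 : ℝ))).sub hbad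
  rw [sub_zero] at hgood
  exact hgood.congr fun n ↦ (eq_sub_of_add_eq (erP_add_erP_not _)).symm
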